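/- Let f : ℝ → ℝ be a polynomial of the form f(η) = -a·η^{2k+1} + Σ_{l=0}^{2k} a_l·η^l with a ≥ c > 0 and |a_l| ≤ C. Then there exist positive constants A, B, D, depending only on c, C, k, such that for all η, ζ ∈ ℝ: (f(η+ζ) - f(ζ))·sgn(η) ≤ A - B·|η|^{2k+1} + D·|ζ|^{2k+1}. -/

import Mathlib

/-!
With `u = η + ζ` and `n = 2k + 1`, oddness of `n` makes `sgn η · (u^n - ζ^n) = |u^n - ζ^n|
≥ |u|^n - |ζ|^n`, so the leading term contributes at most `-c |u|^n + c |ζ|^n`. Each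
lower-order sum is bounded by `ε |·|^n + const`, with `ε` small enough to eat only half of
`c |u|^n`. Finally `|η|^n ≤ 2^(n-1) (|u|^n + |ζ|^n)` turns `-|u|^n` into `-|η|^n` at the cost
of another multiple of `|ζ|^n`.
-/

theorem pow_le_one_add_pow {t : ℝ} (ht : 0 ≤ t) {l m : ℕ} (hlm : l ≤ m) :
    t ^ l ≤ 1 + t ^ m := by
  rcases le_total t 1 with h | h
  · linarith [pow_le_one₀ ht h (n := l), pow_nonneg ht m]
  · linarith [pow_le_pow_right₀ h hlm]

theorem pow_le_mul_pow_succ_add {t ε : ℝ} (ht : 0 ≤ t) (hε : 0 < ε) (m : ℕ) :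
    t ^ m ≤ ε * t ^ (m + 1) + ε⁻¹ ^ m := by
  rcases le_total t ε⁻¹ with h | h
  · linarith [pow_le_pow_left₀ ht h m, mul_nonneg hε.le (pow_nonneg ht (m + 1))]
  · have hεt : 1 ≤ ε * t := by rwa [inv_le_iff_one_le_mul₀' hε] at h
    calc t ^ m ≤ (ε * t) * t ^ m := le_mul_of_one_le_left (pow_nonneg ht m) hεt
      _ = ε * t ^ (m + 1) := by ring
      _ ≤ ε * t ^ (m + 1) + ε⁻¹ ^ m := le_add_of_nonneg_right (by positivity)

theorem pow_le_mul_pow_add_const {t ε : ℝ} (ht : 0 ≤ t) (hε : 0 < ε) {l m : ℕ} (hlm : l ≤ m) :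
    t ^ l ≤ ε * t ^ (m + 1) + (1 + ε⁻¹ ^ m) := by
  linarith [pow_le_one_add_pow ht hlm, pow_le_mul_pow_succ_add ht hε m]

theorem abs_sum_range_mul_pow_le {m : ℕ} {b : ℕ → ℝ} {C ε : ℝ} (hb : ∀ l ≤ m, |b l| ≤ C)
    (hε : 0 < ε) (x : ℝ) :
    |∑ l ∈ Finset.range (m + 1), b l * x ^ l| ≤
      (m + 1) * C * (ε * |x| ^ (m + 1) + (1 + ε⁻¹ ^ m)) := by
  have hterm : ∀ l ∈ Finset.range (m + 1),
      |b l * x ^ l| ≤ C * (ε * |x| ^ (m + 1) + (1 + ε⁻¹ ^ m)) := by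
    intro l hl
    have hlm : l ≤ m := Nat.lt_succ_iff.mp (Finset.mem_range.mp hl)
    rw [abs_mul, abs_pow]
    exact mul_le_mul (hb l hlm) (pow_le_mul_pow_add_const (abs_nonneg x) hε hlm)
      (by positivity) ((abs_nonneg _).trans (hb l hlm))
  calc |∑ l ∈ Finset.range (m + 1), b l * x ^ l|
      ≤ ∑ l ∈ Finset.range (m + 1), |b l * x ^ l| := Finset.abs_sum_le_sum_abs _ _
    _ ≤ ∑ _l ∈ Finset.range (m + 1), C * (ε * |x| ^ (m + 1) + (1 + ε⁻¹ ^ m)) :=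
        Finset.sum_le_sum hterm
    _ = (m + 1) * C * (ε * |x| ^ (m + 1) + (1 + ε⁻¹ ^ m)) := by
        rw [Finset.sum_const, Finset.card_range, nsmul_eq_mul]; push_cast; ring

theorem sign_mul_le_abs (η q : ℝ) : Real.sign η * q ≤ |q| := by
  rcases Real.sign_apply_eq η with h | h | h <;> simp [h, neg_le_abs, le_abs_self]

theorem sign_mul_add_pow_sub_pow {n : ℕ} (hn : Odd n) (η ζ : ℝ) :
    Real.sign η * ((η + ζ) ^ n - ζ ^ n) = |(η + ζ) ^ n - ζ ^ n| := by
  rcases lt_trichotomy η 0 with h | rfl | h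
  · have : (η + ζ) ^ n < ζ ^ n := hn.strictMono_pow (by linarith)
    rw [Real.sign_of_neg h, abs_of_neg (sub_neg.mpr this)]; ring
  · simp
  · have : ζ ^ n < (η + ζ) ^ n := hn.strictMono_pow (by linarith)
    rw [Real.sign_of_pos h, abs_of_pos (sub_pos.mpr this)]; ring

theorem abs_pow_le_two_pow_mul_add (η ζ : ℝ) (n : ℕ) :
    |η| ^ n ≤ 2 ^ (n - 1) * (|η + ζ| ^ n + |ζ| ^ n) := by
  have h : |η| ≤ |η + ζ| + |ζ| := by simpa using abs_sub (η + ζ) ζ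
  exact (pow_le_pow_left₀ (abs_nonneg η) h n).trans (add_pow_le (abs_nonneg _) (abs_nonneg _) n)

theorem mul_abs_pow_sub_abs_pow_le {a c : ℝ} (hc : 0 ≤ c) (hca : c ≤ a) (x y : ℝ) (n : ℕ) :
    c * (|x| ^ n - |y| ^ n) ≤ a * |x ^ n - y ^ n| := by
  have h : |x| ^ n - |y| ^ n ≤ |x ^ n - y ^ n| := by
    simpa only [abs_pow] using abs_sub_abs_le_abs_sub (x ^ n) (y ^ n)
  exact (mul_le_mul_of_nonneg_left h hc).trans (mul_le_mul_of_nonneg_right hca (abs_nonneg _))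

/-- For f(η) = -a η^{2k+1} + Σ_{l≤2k} a_l η^l with c ≤ a ≤ C and |a_l| ≤ C, there are
positive constants A, B, D depending only on c, C, k such that
(f(η+ζ) - f(ζ))·sgn η ≤ A - B|η|^{2k+1} + D|ζ|^{2k+1}. -/
theorem stmt_6 (k : ℕ) (c C : ℝ) (hc : 0 < c) (hcC : c ≤ C) :
    ∃ A B D : ℝ, 0 < A ∧ 0 < B ∧ 0 < D ∧
      ∀ (a : ℝ) (acoef : ℕ → ℝ), c ≤ a → a ≤ C → (∀ l ≤ 2*k, |acoef l| ≤ C) →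
        ∀ η ζ : ℝ,
          ((-(a * (η + ζ) ^ (2*k+1)) + ∑ l ∈ Finset.range (2*k+1), acoef l * (η + ζ) ^ l)
            - (-(a * ζ ^ (2*k+1)) + ∑ l ∈ Finset.range (2*k+1), acoef l * ζ ^ l))
              * Real.sign η ≤ A - B * |η| ^ (2*k+1) + D * |ζ| ^ (2*k+1) := by
  have hC : 0 < C := hc.trans_le hcC
  set N : ℝ := (2 * k : ℕ) + 1
  have hN : 0 < N := by positivity
  set ε : ℝ := c / (2 * (N * C))
  have hε : 0 < ε := by positivity
  have hNCε : N * C * ε = c / 2 := by simp only [ε]; field_simp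
  set K : ℝ := 1 + ε⁻¹ ^ (2 * k)
  refine ⟨2 * (N * C * K), c / (2 * 2 ^ (2 * k)), 2 * c, by positivity, by positivity,
    by positivity, fun a acoef hca _ hcoef η ζ => ?_⟩
  set p := (η + ζ) ^ (2 * k + 1) - ζ ^ (2 * k + 1)
  set Su := ∑ l ∈ Finset.range (2 * k + 1), acoef l * (η + ζ) ^ l
  set Sζ := ∑ l ∈ Finset.range (2 * k + 1), acoef l * ζ ^ l
  have hlead : c * (|η + ζ| ^ (2 * k + 1) - |ζ| ^ (2 * k + 1)) ≤ a * |p| :=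
    mul_abs_pow_sub_abs_pow_le hc.le hca _ _ _
  have hSu : |Su| ≤ c / 2 * |η + ζ| ^ (2 * k + 1) + N * C * K :=
    (abs_sum_range_mul_pow_le hcoef hε (η + ζ)).trans_eq (by rw [mul_add, ← mul_assoc, hNCε])
  have hSζ : |Sζ| ≤ c / 2 * |ζ| ^ (2 * k + 1) + N * C * K :=
    (abs_sum_range_mul_pow_le hcoef hε ζ).trans_eq (by rw [mul_add, ← mul_assoc, hNCε])
  have hη : c / (2 * 2 ^ (2 * k)) * |η| ^ (2 * k + 1) ≤
      c / 2 * (|η + ζ| ^ (2 * k + 1) + |ζ| ^ (2 * k + 1)) :=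
    calc c / (2 * 2 ^ (2 * k)) * |η| ^ (2 * k + 1)
        ≤ c / (2 * 2 ^ (2 * k)) * (2 ^ (2 * k) * (|η + ζ| ^ (2 * k + 1) + |ζ| ^ (2 * k + 1))) :=
          mul_le_mul_of_nonneg_left (by simpa using abs_pow_le_two_pow_mul_add η ζ (2 * k + 1))
            (by positivity)
      _ = _ := by field_simp
  calc (-(a * (η + ζ) ^ (2 * k + 1)) + Su - (-(a * ζ ^ (2 * k + 1)) + Sζ)) * Real.sign η
      = -(a * |p|) + Real.sign η * (Su - Sζ) := by
        rw [← sign_mul_add_pow_sub_pow (odd_two_mul_add_one k)]; ring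
    _ ≤ -(a * |p|) + (|Su| + |Sζ|) := by
        gcongr
        exact (sign_mul_le_abs η _).trans (abs_sub _ _)
    _ ≤ _ := by linarith
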